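/- Let Γ be a lattice of signature (3, b−3) with b ≥ 4. Call a point [x] of the period domain Q of Γ_ℝ exceptional if the plane W_x = span_ℝ(Re x, Im x) ⊂ Γ_ℝ is spanned by two vectors lying in the image of Γ ⊗ ℚ in Γ_ℝ. Then the set of exceptional points is dense in Q. -/

import Mathlib

open Matrix
open scoped LinearAlgebra.Projectivization

/-- The quotient topology on a projectivization. -/
noncomputable instance projTopology {K V : Type*} [DivisionRing K] [AddCommGroup V]
    [Module K V] [TopologicalSpace V] : TopologicalSpace (ℙ K V) :=
  inferInstanceAs (TopologicalSpace (Quotient (projectivizationSetoid K V)))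

/-- The induced real bilinear form on `Γ_ℝ = ℝ^n` of the lattice with Gram matrix `G`. -/
noncomputable def formR {n : ℕ} (G : Matrix (Fin n) (Fin n) ℤ) (x y : Fin n → ℝ) : ℝ :=
  x ⬝ᵥ ((G.map ((↑) : ℤ → ℝ)) *ᵥ y)

/-- The ℂ-bilinear extension of the form to `(Γ_ℝ)_ℂ = ℂ^n`. -/
noncomputable def formC {n : ℕ} (G : Matrix (Fin n) (Fin n) ℤ) (x y : Fin n → ℂ) : ℂ :=
  x ⬝ᵥ ((G.map ((↑) : ℤ → ℂ)) *ᵥ y)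

/-- The period domain `Q ⊂ ℙ((Γ_ℝ)_ℂ)`. -/
def periodDomain {n : ℕ} (G : Matrix (Fin n) (Fin n) ℤ) : Set (ℙ ℂ (Fin n → ℂ)) :=
  {p | ∃ (z : Fin n → ℂ) (hz : z ≠ 0), p = Projectivization.mk ℂ z hz ∧
    formC G z z = 0 ∧ 0 < (formC G (z + star z) (z + star z)).re}

/-- `[x] ∈ Q` is exceptional: `W_x = span_ℝ(Re x, Im x)` is spanned by two vectors lying
in the image of `Γ ⊗ ℚ` in `Γ_ℝ`. -/
def IsExceptional {n : ℕ} (p : ℙ ℂ (Fin n → ℂ)) : Prop :=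
  ∃ (z : Fin n → ℂ) (hz : z ≠ 0), p = Projectivization.mk ℂ z hz ∧
    ∃ a c : Fin n → ℚ,
      Submodule.span ℝ {(fun i => (z i).re), (fun i => (z i).im)} =
        Submodule.span ℝ {(fun i => ((a i : ℝ))), (fun i => ((c i : ℝ)))}

/-!
A point of `Q` is a line `[u + i v]` with `u ⊥ v` and `q(u) = q(v) > 0`: an orthogonal basis of
equal lengths of a positive definite plane. Gram–Schmidt turns every pair `(a, c)` spanning a
positive definite plane into such a basis of the same plane, continuously in `(a, c)`. This gives a
continuous surjection onto `Q` from an open set of pairs of vectors; rational pairs are dense there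
and are sent to exceptional points.
-/
lemma Submodule.span_pair_add_smul_smul {K M : Type*} [Field K] [AddCommGroup M] [Module K M]
    (a c : M) (r : K) {s : K} (hs : s ≠ 0) :
    span K {a + r • c, s • c} = span K {a, c} := by
  apply le_antisymm <;>
    rw [span_le, Set.insert_subset_iff, Set.singleton_subset_iff, SetLike.mem_coe,
      SetLike.mem_coe, mem_span_pair, mem_span_pair]
  · exact ⟨⟨1, r, by rw [one_smul]⟩, ⟨0, s, by rw [zero_smul, zero_add]⟩⟩
  · refine ⟨⟨1, -(r / s), ?_⟩, ⟨0, s⁻¹, ?_⟩⟩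
    · rw [one_smul, smul_smul, neg_mul, div_mul_cancel₀ r hs, neg_smul, add_neg_cancel_right]
    · rw [zero_smul, zero_add, smul_smul, inv_mul_cancel₀ hs, one_smul]

section QuadraticExpansion

variable {ι R : Type*} [Fintype ι] [CommRing R]

lemma Matrix.IsSymm.dotProduct_mulVec_comm {M : Matrix ι ι R} (hM : M.IsSymm) (x y : ι → R) :
    x ⬝ᵥ M *ᵥ y = y ⬝ᵥ M *ᵥ x := by
  rw [dotProduct_mulVec, ← mulVec_transpose, hM.eq, dotProduct_comm]

lemma Matrix.add_smul_dotProduct_mulVec_add_smul (M : Matrix ι ι R) (x y : ι → R) (t : R) :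
    (x + t • y) ⬝ᵥ M *ᵥ (x + t • y) =
      x ⬝ᵥ M *ᵥ x + t * (x ⬝ᵥ M *ᵥ y + y ⬝ᵥ M *ᵥ x) + t ^ 2 * (y ⬝ᵥ M *ᵥ y) := by
  simp only [mulVec_add, mulVec_smul, dotProduct_add, add_dotProduct, dotProduct_smul,
    smul_dotProduct, smul_eq_mul]
  ring

end QuadraticExpansion

section Forms

variable {n : ℕ} {G : Matrix (Fin n) (Fin n) ℤ}

lemma formR_comm (hG : G.IsSymm) (x y : Fin n → ℝ) : formR G x y = formR G y x :=
  (hG.map _).dotProduct_mulVec_comm x y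

lemma formR_add_smul_left (x y z : Fin n → ℝ) (t : ℝ) :
    formR G (x + t • y) z = formR G x z + t * formR G y z := by
  simp only [formR, add_dotProduct, smul_dotProduct, smul_eq_mul]

lemma formR_smul_right (x y : Fin n → ℝ) (t : ℝ) :
    formR G x (t • y) = t * formR G x y := by
  simp only [formR, mulVec_smul, dotProduct_smul, smul_eq_mul]

lemma formR_add_smul_self (hG : G.IsSymm) (x y : Fin n → ℝ) (t : ℝ) :
    formR G (x + t • y) (x + t • y) =
      formR G x x + 2 * t * formR G x y + t ^ 2 * formR G y y := by
  rw [formR, add_smul_dotProduct_mulVec_add_smul, ← formR, ← formR, ← formR, ← formR,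
    formR_comm hG y x]
  ring

lemma formR_smul_self (x : Fin n → ℝ) (t : ℝ) :
    formR G (t • x) (t • x) = t ^ 2 * formR G x x := by
  simp only [formR, mulVec_smul, dotProduct_smul, smul_dotProduct, smul_eq_mul]
  ring

lemma formC_ofReal (x y : Fin n → ℝ) :
    formC G (fun i => (x i : ℂ)) (fun i => (y i : ℂ)) = formR G x y := by
  change _ = Complex.ofRealHom _
  rw [formC, formR, RingHom.map_dotProduct]
  congr 1
  funext i
  rw [Function.comp_apply, RingHom.map_mulVec, Matrix.map_map]
  rfl

lemma Continuous.formR {X : Type*} [TopologicalSpace X] {f g : X → Fin n → ℝ}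
    (hf : Continuous f) (hg : Continuous g) : Continuous fun x => formR G (f x) (g x) :=
  hf.dotProduct (continuous_const.matrix_mulVec hg)

end Forms

section ComplexVectors

variable {n : ℕ} {G : Matrix (Fin n) (Fin n) ℤ}

def complexVec (x y : Fin n → ℝ) : Fin n → ℂ := fun i => ⟨x i, y i⟩

lemma complexVec_re_im (z : Fin n → ℂ) :
    complexVec (fun i => (z i).re) (fun i => (z i).im) = z :=
  funext fun i => Complex.eta (z i)

lemma complexVec_eq_add_I_smul (x y : Fin n → ℝ) :
    complexVec x y = (fun i => (x i : ℂ)) + Complex.I • fun i => (y i : ℂ) := by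
  funext i
  apply Complex.ext <;> simp [complexVec]

lemma formC_complexVec_self (hG : G.IsSymm) (x y : Fin n → ℝ) :
    formC G (complexVec x y) (complexVec x y) = ⟨formR G x x - formR G y y, 2 * formR G x y⟩ := by
  rw [complexVec_eq_add_I_smul, formC, add_smul_dotProduct_mulVec_add_smul, ← formC, ← formC,
    ← formC, ← formC, formC_ofReal, formC_ofReal, formC_ofReal, formC_ofReal, formR_comm hG y x]
  apply Complex.ext <;> simp <;> ring

lemma re_formC_add_star_self (z : Fin n → ℂ) :
    (formC G (z + star z) (z + star z)).re =
      4 * formR G (fun i => (z i).re) (fun i => (z i).re) := by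
  have hz : z + star z = fun i => (((2 : ℝ) • fun i => (z i).re) i : ℂ) := by
    funext i
    simp [Complex.add_conj]
  rw [hz, formC_ofReal, formR_smul_self, Complex.ofReal_re]
  norm_num

lemma continuous_complexVec {X : Type*} [TopologicalSpace X] {x y : X → Fin n → ℝ}
    (hx : Continuous x) (hy : Continuous y) : Continuous fun p => complexVec (x p) (y p) :=
  continuous_pi fun i => Complex.equivRealProdCLM.symm.continuous.comp
    ((continuous_apply i).comp hx |>.prodMk ((continuous_apply i).comp hy))

end ComplexVectors

noncomputable section PeriodVec

variable {n : ℕ} (G : Matrix (Fin n) (Fin n) ℤ)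

def gramDet (a c : Fin n → ℝ) : ℝ := formR G a a * formR G c c - formR G a c ^ 2

def positivePairs : Set ((Fin n → ℝ) × (Fin n → ℝ)) :=
  {p | 0 < formR G p.2 p.2 ∧ 0 < gramDet G p.1 p.2}

/- Gram–Schmidt on `(c, a)`, rescaled so that both vectors have square length
`gramDet G a c / formR G c c`. -/
def periodRe (p : (Fin n → ℝ) × (Fin n → ℝ)) : Fin n → ℝ :=
  p.1 + (-(formR G p.1 p.2 / formR G p.2 p.2)) • p.2

def periodIm (p : (Fin n → ℝ) × (Fin n → ℝ)) : Fin n → ℝ :=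
  (√(gramDet G p.1 p.2) / formR G p.2 p.2) • p.2

def periodVec (p : (Fin n → ℝ) × (Fin n → ℝ)) : Fin n → ℂ :=
  complexVec (periodRe G p) (periodIm G p)

variable {G}

lemma formR_periodRe_self (hG : G.IsSymm) {p : (Fin n → ℝ) × (Fin n → ℝ)}
    (hc : formR G p.2 p.2 ≠ 0) :
    formR G (periodRe G p) (periodRe G p) = gramDet G p.1 p.2 / formR G p.2 p.2 := by
  rw [periodRe, formR_add_smul_self hG, gramDet]
  field_simp
  ring

lemma formR_periodIm_self {p : (Fin n → ℝ) × (Fin n → ℝ)} (hD : 0 ≤ gramDet G p.1 p.2) :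
    formR G (periodIm G p) (periodIm G p) = gramDet G p.1 p.2 / formR G p.2 p.2 := by
  rw [periodIm, formR_smul_self, div_pow, Real.sq_sqrt hD]
  field_simp

lemma formR_periodRe_periodIm {p : (Fin n → ℝ) × (Fin n → ℝ)} (hc : formR G p.2 p.2 ≠ 0) :
    formR G (periodRe G p) (periodIm G p) = 0 := by
  rw [periodRe, periodIm, formR_smul_right, formR_add_smul_left]
  field_simp
  ring

lemma formC_periodVec_self (hG : G.IsSymm) {p} (hp : p ∈ positivePairs G) :
    formC G (periodVec G p) (periodVec G p) = 0 := by
  rw [periodVec, formC_complexVec_self hG, formR_periodRe_self hG hp.1.ne',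
    formR_periodIm_self hp.2.le, formR_periodRe_periodIm hp.1.ne']
  simp only [sub_self, mul_zero]
  rfl

lemma re_formC_periodVec_pos (hG : G.IsSymm) {p} (hp : p ∈ positivePairs G) :
    0 < (formC G (periodVec G p + star (periodVec G p))
      (periodVec G p + star (periodVec G p))).re := by
  rw [re_formC_add_star_self]
  change 0 < 4 * formR G (periodRe G p) (periodRe G p)
  rw [formR_periodRe_self hG hp.1.ne']
  exact mul_pos four_pos (div_pos hp.2 hp.1)

lemma periodVec_ne_zero (hG : G.IsSymm) {p} (hp : p ∈ positivePairs G) : periodVec G p ≠ 0 := by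
  intro h
  have hpos := re_formC_periodVec_pos hG hp
  simp [h, formC] at hpos

lemma span_periodRe_periodIm {p : (Fin n → ℝ) × (Fin n → ℝ)} (hp : p ∈ positivePairs G) :
    Submodule.span ℝ {periodRe G p, periodIm G p} = Submodule.span ℝ {p.1, p.2} :=
  Submodule.span_pair_add_smul_smul _ _ _ (div_pos (Real.sqrt_pos.2 hp.2) hp.1).ne'

lemma periodVec_eq_complexVec_of_isotropic {u v : Fin n → ℝ} (hu : 0 < formR G u u)
    (hv : formR G v v = formR G u u) (huv : formR G u v = 0) :
    (u, v) ∈ positivePairs G ∧ periodVec G (u, v) = complexVec u v := by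
  have hD : gramDet G u v = formR G u u ^ 2 := by rw [gramDet, hv, huv]; ring
  refine ⟨⟨hv ▸ hu, hD ▸ pow_pos hu 2⟩, ?_⟩
  rw [periodVec, periodRe, periodIm]
  simp only [hD, huv, hv, Real.sqrt_sq hu.le, div_self hu.ne', zero_div, neg_zero, zero_smul,
    add_zero, one_smul]

variable (G) in
lemma isOpen_positivePairs : IsOpen (positivePairs G) :=
  (isOpen_lt continuous_const (continuous_snd.formR continuous_snd)).inter
    (isOpen_lt continuous_const (((continuous_fst.formR continuous_fst).mul
      (continuous_snd.formR continuous_snd)).sub ((continuous_fst.formR continuous_snd).pow 2)))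

variable (G) in
lemma continuous_periodVec : Continuous fun p : positivePairs G => periodVec G p := by
  have hfst : Continuous fun p : positivePairs G => p.1.1 :=
    continuous_fst.comp continuous_subtype_val
  have hsnd : Continuous fun p : positivePairs G => p.1.2 :=
    continuous_snd.comp continuous_subtype_val
  have hc := hsnd.formR (G := G) hsnd
  have hc0 : ∀ p : positivePairs G, formR G p.1.2 p.1.2 ≠ 0 := fun p => p.2.1.ne'
  have hD : Continuous fun p : positivePairs G => gramDet G p.1.1 p.1.2 :=
    ((hfst.formR hfst).mul hc).sub ((hfst.formR hsnd).pow 2)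
  exact continuous_complexVec (hfst.add ((((hfst.formR hsnd).div hc hc0).neg).smul hsnd))
    (((Real.continuous_sqrt.comp hD).div hc hc0).smul hsnd)

end PeriodVec

section PeriodMap

variable {n : ℕ} {G : Matrix (Fin n) (Fin n) ℤ}

noncomputable def periodMap (hG : G.IsSymm) (p : positivePairs G) : periodDomain G :=
  ⟨Projectivization.mk ℂ (periodVec G p) (periodVec_ne_zero hG p.2),
    _, _, rfl, formC_periodVec_self hG p.2, re_formC_periodVec_pos hG p.2⟩

lemma continuous_periodMap (hG : G.IsSymm) : Continuous (periodMap hG) :=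
  (continuous_quotient_mk'.comp ((continuous_periodVec G).subtype_mk _)).subtype_mk _

lemma periodMap_surjective (hG : G.IsSymm) : Function.Surjective (periodMap hG) := by
  rintro ⟨_, z, -, rfl, hzz, hpos⟩
  set u : Fin n → ℝ := fun i => (z i).re
  set v : Fin n → ℝ := fun i => (z i).im
  have hzuv : complexVec u v = z := complexVec_re_im z
  have hu : 0 < formR G u u := by
    rw [re_formC_add_star_self] at hpos
    linarith
  rw [← hzuv, formC_complexVec_self hG, Complex.ext_iff, Complex.zero_re, Complex.zero_im] at hzz
  have hv : formR G v v = formR G u u := by linarith [hzz.1]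
  have huv : formR G u v = 0 := by linarith [hzz.2]
  obtain ⟨hmem, hvec⟩ := periodVec_eq_complexVec_of_isotropic hu hv huv
  refine ⟨⟨(u, v), hmem⟩, Subtype.ext ?_⟩
  simp only [periodMap, hvec, hzuv]

lemma isExceptional_periodMap (hG : G.IsSymm) (p : positivePairs G) (a c : Fin n → ℚ)
    (hac : p.1 = (fun i => (a i : ℝ), fun i => (c i : ℝ))) :
    IsExceptional (periodMap hG p : ℙ ℂ (Fin n → ℂ)) := by
  refine ⟨_, _, rfl, a, c, ?_⟩
  change Submodule.span ℝ {periodRe G p, periodIm G p} = _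
  rw [span_periodRe_periodIm p.2, hac]

end PeriodMap

lemma denseRange_ratCast_pair (n : ℕ) : DenseRange fun ac : (Fin n → ℚ) × (Fin n → ℚ) =>
    ((fun i => (ac.1 i : ℝ)), fun i => (ac.2 i : ℝ)) :=
  have hvec : DenseRange (Pi.map fun (_ : Fin n) (q : ℚ) => (q : ℝ)) :=
    .piMap fun _ => Rat.denseRange_cast
  hvec.prodMap hvec

theorem stmt13_general (n : ℕ) (G : Matrix (Fin n) (Fin n) ℤ)
    (hsymm : G.IsSymm) :
    Dense {p : periodDomain G | IsExceptional (p : ℙ ℂ (Fin n → ℂ))} := by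
  have hrat := (denseRange_ratCast_pair n).preimage (isOpen_positivePairs G).isOpenMap_subtype_val
  refine ((periodMap_surjective hsymm).denseRange.dense_image (continuous_periodMap hsymm)
    hrat).mono ?_
  rintro _ ⟨p, ⟨⟨a, c⟩, hac⟩, rfl⟩
  exact isExceptional_periodMap hsymm p a c hac.symm

/-- Let `Γ` be a lattice of signature `(3, b−3)`, `b ≥ 4`.  The set of exceptional period
points is dense in the period domain `Q`. -/
theorem stmt13 (n : ℕ) (hn : 4 ≤ n) (G : Matrix (Fin n) (Fin n) ℤ)
    (hsymm : G.IsSymm)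
    (hdet : ((G.map ((↑) : ℤ → ℝ))).det ≠ 0)
    (hsig : ∃ F : Submodule ℝ (Fin n → ℝ), Module.finrank ℝ F = 3 ∧
      ∀ x ∈ F, x ≠ 0 → 0 < formR G x x)
    (hmax : ∀ F : Submodule ℝ (Fin n → ℝ),
      (∀ x ∈ F, x ≠ 0 → 0 < formR G x x) → Module.finrank ℝ F ≤ 3) :
    Dense {p : periodDomain G | IsExceptional (p : ℙ ℂ (Fin n → ℂ))} :=
  stmt13_general n G hsymm
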